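/- arXiv:2006.04268 — 7 statements merged into one kernel-verified Lean document; each statement's English description precedes it below -/
import Mathlib

section
/- A permutation σ of order n > 1 is a king permutation (i.e., |σ_{i+1} − σ_i| > 1 for all 1 ≤ i ≤ n−1) if and only if its breadth br(σ) = min_{i≠j} (|i−j| + |σ_i−σ_j|) is at least 3. -/
open Finset

/-- Manhattan distance between the plot points `i` and `j` of `σ`. -/
def mdist {n : ℕ} (σ : Fin n → Fin n) (i j : Fin n) : ℕ :=
  Nat.dist (i : ℕ) (j : ℕ) + Nat.dist (σ i : ℕ) (σ j : ℕ)

/-- The breadth of `σ`: minimum Manhattan distance over distinct pairs (⊤ if no pairs). -/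
noncomputable def br {n : ℕ} (σ : Fin n → Fin n) : ℕ∞ :=
  sInf {x : ℕ∞ | ∃ i j : Fin n, i ≠ j ∧ x = (mdist σ i j : ℕ∞)}

/-- Cyclic Manhattan distance: `|σ j - σ i| + min (|j-i|) (n - |j-i|)`. -/
def cdist {n : ℕ} (σ : Fin n → Fin n) (i j : Fin n) : ℕ :=
  Nat.dist (σ i : ℕ) (σ j : ℕ) +
    min (Nat.dist (i : ℕ) (j : ℕ)) (n - Nat.dist (i : ℕ) (j : ℕ))

/-- Cyclic breadth of `σ`. -/
noncomputable def cbr {n : ℕ} (σ : Fin n → Fin n) : ℕ∞ :=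
  sInf {x : ℕ∞ | ∃ i j : Fin n, i ≠ j ∧ x = (cdist σ i j : ℕ∞)}

/-- King permutation: consecutive entries differ by more than 1. -/
def IsKing {n : ℕ} (σ : Fin n → Fin n) : Prop :=
  ∀ i j : Fin n, (j : ℕ) = (i : ℕ) + 1 → 1 < Nat.dist (σ i : ℕ) (σ j : ℕ)

/-- Cylindrical king permutation: cyclically consecutive entries differ by more than 1. -/
def IsCylKing {n : ℕ} (σ : Fin n → Fin n) : Prop :=
  ∀ i j : Fin n, i ≠ j → (j : ℕ) = ((i : ℕ) + 1) % n →
    1 < Nat.dist (σ i : ℕ) (σ j : ℕ)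

/-- `π` is the (standardized) pattern formed by the entries of `σ` at the index set `s`. -/
def IsPatternOn {n m : ℕ} (σ : Fin n → Fin n) (s : Finset (Fin n))
    (π : Fin m → Fin m) : Prop :=
  ∃ f : Fin m → Fin n, StrictMono f ∧ (∀ a, f a ∈ s) ∧ s.card = m ∧
    ∀ a b, (π a < π b ↔ σ (f a) < σ (f b))

/-- `σ` contains the pattern `π` (classical pattern containment). -/
def ContainsPat {n m : ℕ} (σ : Fin n → Fin n) (π : Fin m → Fin m) : Prop :=
  ∃ f : Fin m → Fin n, StrictMono f ∧ ∀ a b, (π a < π b ↔ σ (f a) < σ (f b))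

/-! Distinct points of the plot of a permutation differ in both coordinates, so their Manhattan
distance is at least 2, with equality exactly for entries adjacent both in position and in value.
Hence `br σ ≥ 3` says precisely that adjacent positions never carry adjacent values. -/

theorem le_br_iff {n : ℕ} (σ : Fin n → Fin n) (k : ℕ∞) :
    k ≤ br σ ↔ ∀ i j, i ≠ j → k ≤ mdist σ i j := by
  simp only [br, le_sInf_iff, Set.mem_ofPred_eq]
  constructor
  · exact fun h i j hij => h _ ⟨i, j, hij, rfl⟩
  · rintro h _ ⟨i, j, hij, rfl⟩
    exact h i j hij

theorem Nat.dist_eq_one_iff {a b : ℕ} : Nat.dist a b = 1 ↔ b = a + 1 ∨ a = b + 1 := by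
  unfold Nat.dist
  omega

theorem Fin.val_dist_pos {n : ℕ} {i j : Fin n} (hij : i ≠ j) : 0 < Nat.dist (i : ℕ) j :=
  Nat.dist_pos_of_ne (Fin.val_ne_of_ne hij)

theorem three_le_mdist_iff {n : ℕ} {σ : Fin n → Fin n} (hσ : Function.Injective σ)
    {i j : Fin n} (hij : i ≠ j) :
    3 ≤ mdist σ i j ↔ (Nat.dist (i : ℕ) j = 1 → 1 < Nat.dist (σ i : ℕ) (σ j)) := by
  have hpos := Fin.val_dist_pos hij
  have hσpos := Fin.val_dist_pos (hσ.ne hij)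
  unfold mdist
  omega

theorem isKing_iff_forall_three_le_mdist {n : ℕ} {σ : Fin n → Fin n}
    (hσ : Function.Injective σ) : IsKing σ ↔ ∀ i j, i ≠ j → 3 ≤ mdist σ i j := by
  constructor
  · intro hk i j hij
    rw [three_le_mdist_iff hσ hij, Nat.dist_eq_one_iff]
    rintro (hj_succ | hi_succ)
    · exact hk i j hj_succ
    · rw [Nat.dist_comm]
      exact hk j i hi_succ
  · intro h i j hji
    have hne : i ≠ j := Fin.ne_of_val_ne (by omega)
    exact (three_le_mdist_iff hσ hne).1 (h i j hne) (Nat.dist_eq_one_iff.2 (Or.inl hji))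

theorem stmt_0_general (n : ℕ) (σ : Equiv.Perm (Fin n)) :
    IsKing ⇑σ ↔ 3 ≤ br ⇑σ := by
  rw [isKing_iff_forall_three_le_mdist σ.injective, le_br_iff]
  exact forall₂_congr fun i j => imp_congr_right fun _ => by norm_cast

theorem stmt_0 (n : ℕ) (hn : 1 < n) (σ : Equiv.Perm (Fin n)) :
    IsKing ⇑σ ↔ 3 ≤ br ⇑σ :=
  stmt_0_general n σ
end

section
/- A permutation σ of order n > 1 is a cylindrical king permutation if and only if its cyclic breadth is at least 3. -/
/-!
For distinct indices the cyclic index distance `min (|j - i|) (n - |j - i|)` is `1` when the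
indices are cyclically consecutive and at least `2` otherwise. Since `σ` is injective, its values
at distinct indices differ by at least `1`, so only consecutive pairs can have cyclic distance
below `3`, and for them it equals `|σ j - σ i| + 1`.
-/

open Finset

section CyclicDistance

variable {n : ℕ}

theorem val_eq_cyclic_succ_iff (i j : Fin n) :
    (j : ℕ) = ((i : ℕ) + 1) % n ↔ (j : ℕ) = i + 1 ∨ ((i : ℕ) + 1 = n ∧ (j : ℕ) = 0) := by
  have hj := j.isLt
  rcases Nat.lt_or_ge ((i : ℕ) + 1) n with h | h
  · rw [Nat.mod_eq_of_lt h]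
    omega
  · rw [show (i : ℕ) + 1 = n by omega, Nat.mod_self]
    omega

theorem cyclic_index_dist_eq_one_of_succ {i j : Fin n} (hij : i ≠ j)
    (hs : (j : ℕ) = ((i : ℕ) + 1) % n) :
    min (Nat.dist i j) (n - Nat.dist i j) = 1 := by
  have hi := i.isLt
  have hij' : (i : ℕ) ≠ j := Fin.val_ne_of_ne hij
  rw [val_eq_cyclic_succ_iff] at hs
  simp only [Nat.dist]
  omega

theorem two_le_cyclic_index_dist {i j : Fin n} (hij : i ≠ j)
    (hs : (j : ℕ) ≠ ((i : ℕ) + 1) % n) (hs' : (i : ℕ) ≠ ((j : ℕ) + 1) % n) :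
    2 ≤ min (Nat.dist i j) (n - Nat.dist i j) := by
  have hi := i.isLt
  have hj := j.isLt
  have hij' : (i : ℕ) ≠ j := Fin.val_ne_of_ne hij
  rw [Ne, val_eq_cyclic_succ_iff] at hs hs'
  simp only [Nat.dist]
  omega

theorem cdist_comm (σ : Fin n → Fin n) (i j : Fin n) : cdist σ i j = cdist σ j i := by
  simp only [cdist, Nat.dist_comm]

theorem cdist_of_cyclic_succ (σ : Fin n → Fin n) {i j : Fin n} (hij : i ≠ j)
    (hs : (j : ℕ) = ((i : ℕ) + 1) % n) :
    cdist σ i j = Nat.dist (σ i) (σ j) + 1 := by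
  rw [cdist, cyclic_index_dist_eq_one_of_succ hij hs]

theorem three_le_cdist_of_not_cyclic_adjacent {σ : Fin n → Fin n} (hσ : Function.Injective σ)
    {i j : Fin n} (hij : i ≠ j)
    (hs : (j : ℕ) ≠ ((i : ℕ) + 1) % n) (hs' : (i : ℕ) ≠ ((j : ℕ) + 1) % n) :
    3 ≤ cdist σ i j := by
  have hσij : (σ i : ℕ) ≠ σ j := Fin.val_ne_of_ne (hσ.ne hij)
  have hpos : 1 ≤ Nat.dist (σ i : ℕ) (σ j) := by
    simp only [Nat.dist]
    omega
  have hidx := two_le_cyclic_index_dist hij hs hs'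
  rw [cdist]
  omega

theorem three_le_cbr_iff (σ : Fin n → Fin n) :
    3 ≤ cbr σ ↔ ∀ i j, i ≠ j → 3 ≤ cdist σ i j := by
  simp only [cbr, le_sInf_iff, Set.mem_ofPred_eq]
  constructor
  · intro h i j hij
    exact_mod_cast h _ ⟨i, j, hij, rfl⟩
  · rintro h _ ⟨i, j, hij, rfl⟩
    exact_mod_cast h i j hij

end CyclicDistance

theorem stmt_1_general (n : ℕ) (σ : Equiv.Perm (Fin n)) :
    IsCylKing ⇑σ ↔ 3 ≤ cbr ⇑σ := by
  rw [three_le_cbr_iff]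
  constructor
  · intro hk i j hij
    by_cases hs : (j : ℕ) = ((i : ℕ) + 1) % n
    · have hgap := hk i j hij hs
      rw [cdist_of_cyclic_succ σ hij hs]
      omega
    by_cases hs' : (i : ℕ) = ((j : ℕ) + 1) % n
    · have hgap := hk j i hij.symm hs'
      rw [cdist_comm, cdist_of_cyclic_succ σ hij.symm hs']
      omega
    exact three_le_cdist_of_not_cyclic_adjacent σ.injective hij hs hs'
  · intro h3 i j hij hs
    have hcd := h3 i j hij
    rw [cdist_of_cyclic_succ σ hij hs] at hcd
    omega

theorem stmt_1 (n : ℕ) (hn : 1 < n) (σ : Equiv.Perm (Fin n)) :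
    IsCylKing ⇑σ ↔ 3 ≤ cbr ⇑σ :=
  stmt_1_general n σ
end

section
/- If σ' ∈ S_{n−1} is obtained from σ ∈ S_n by deleting a single entry (and standardizing), then cbr(σ') ≥ cbr(σ) − 1; that is, omitting a single entry decreases the cyclic breadth by at most one. -/
open Finset

/-!
Deleting the entry at position `k` embeds the positions by `k.succAbove` and the values by
`(σ k).succAbove`, so a pair of `σ'` reappears in `σ` with its cyclic position distance and its
value distance each grown by at most one, and only when the deleted point lies in the way. If it
lies in the way in both coordinates, the route through the deleted point has total length at most
`cdist σ' i j + 2`, so one of its two legs has length at most `cdist σ' i j + 1`.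
-/

lemma Fin.val_succAbove_eq_ite {m : ℕ} (p : Fin (m + 1)) (i : Fin m) :
    (p.succAbove i : ℕ) = if (i : ℕ) < p then (i : ℕ) else (i : ℕ) + 1 := by
  unfold Fin.succAbove
  split_ifs <;> simp_all [Fin.lt_def]

lemma StrictMono.eq_succAbove {m : ℕ} {g : Fin m → Fin (m + 1)} (hg : StrictMono g)
    {p : Fin (m + 1)} (hp : ∀ a, g a ≠ p) : g = p.succAbove := by
  refine (hg.range_inj (Fin.strictMono_succAbove p)).mp ?_
  rw [Fin.range_succAbove]
  refine Set.eq_of_subset_of_ncard_le (fun _ ⟨a, ha⟩ => ha ▸ hp a) ?_ (Set.toFinite _)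
  rw [Set.ncard_range_of_injective hg.injective, Set.ncard_compl, Set.ncard_singleton]
  simp

def cycDist (N a b : ℕ) : ℕ := min (Nat.dist a b) (N - Nat.dist a b)

lemma cdist_eq_dist_add_cycDist {n : ℕ} (σ : Fin n → Fin n) (i j : Fin n) :
    cdist σ i j = Nat.dist (σ i) (σ j) + cycDist n i j := rfl

lemma Fin.dist_val_succAbove {m : ℕ} (p : Fin (m + 1)) (a b : Fin m) :
    Nat.dist (p.succAbove a) (p.succAbove b) ≤ Nat.dist a b ∨
      (Nat.dist (p.succAbove a) (p.succAbove b) ≤ Nat.dist a b + 1 ∧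
        Nat.dist (p.succAbove a) p + Nat.dist p (p.succAbove b) ≤ Nat.dist a b + 1) := by
  simp only [Fin.val_succAbove_eq_ite, Nat.dist]
  split_ifs <;> omega

lemma Fin.cycDist_val_succAbove {m : ℕ} (p : Fin (m + 1)) (a b : Fin m) :
    cycDist (m + 1) (p.succAbove a) (p.succAbove b) ≤ cycDist m a b ∨
      (cycDist (m + 1) (p.succAbove a) (p.succAbove b) ≤ cycDist m a b + 1 ∧
        cycDist (m + 1) (p.succAbove a) p + cycDist (m + 1) p (p.succAbove b)
          ≤ cycDist m a b + 1) := by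
  have := a.isLt; have := b.isLt; have := p.isLt
  simp only [cycDist, Fin.val_succAbove_eq_ite, Nat.dist]
  split_ifs <;> omega

lemma exists_cdist_succAbove_le {m : ℕ} {σ : Fin (m + 1) → Fin (m + 1)} {τ : Fin m → Fin m}
    {k : Fin (m + 1)} (hστ : ∀ a, σ (k.succAbove a) = (σ k).succAbove (τ a)) (i j : Fin m) :
    cdist σ (k.succAbove i) (k.succAbove j) ≤ cdist τ i j + 1 ∨
      cdist σ (k.succAbove i) k ≤ cdist τ i j + 1 ∨
      cdist σ k (k.succAbove j) ≤ cdist τ i j + 1 := by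
  have hval := Fin.dist_val_succAbove (σ k) (τ i) (τ j)
  have hpos := Fin.cycDist_val_succAbove k i j
  simp only [cdist_eq_dist_add_cycDist, hστ]
  omega

lemma IsPatternOn.apply_succAbove {m : ℕ} {σ : Equiv.Perm (Fin (m + 1))} {τ : Equiv.Perm (Fin m)}
    {k : Fin (m + 1)} (h : IsPatternOn σ (univ.erase k) τ) (a : Fin m) :
    σ (k.succAbove a) = (σ k).succAbove (τ a) := by
  obtain ⟨f, hf, hmem, -, hfτ⟩ := h
  have hfk : ∀ a, f a ≠ k := fun a => (mem_erase.mp (hmem a)).1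
  obtain rfl : f = k.succAbove := hf.eq_succAbove hfk
  have hψ : StrictMono (σ ∘ k.succAbove ∘ τ.symm) := fun x y hxy =>
    (hfτ _ _).mp (by simpa using hxy)
  simpa using congrFun (hψ.eq_succAbove fun x hx => hfk _ (σ.injective hx)) (τ a)

lemma cbr_sub_one_le_of_forall_exists {n m : ℕ} {σ : Fin n → Fin n} {τ : Fin m → Fin m}
    (h : ∀ i j, i ≠ j → ∃ p q, p ≠ q ∧ cdist σ p q ≤ cdist τ i j + 1) :
    cbr σ - 1 ≤ cbr τ := by
  refine le_sInf ?_
  rintro _ ⟨i, j, hij, rfl⟩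
  obtain ⟨p, q, hpq, hle⟩ := h i j hij
  rw [tsub_le_iff_right]
  calc cbr σ ≤ cdist σ p q := sInf_le ⟨p, q, hpq, rfl⟩
    _ ≤ _ := mod_cast hle

theorem stmt_5 (n : ℕ) (σ : Equiv.Perm (Fin n)) (σ' : Equiv.Perm (Fin (n - 1)))
    (k : Fin n) (h : IsPatternOn ⇑σ (Finset.univ.erase k) ⇑σ') :
    cbr ⇑σ - 1 ≤ cbr ⇑σ' := by
  obtain ⟨m, rfl⟩ : ∃ m, n = m + 1 := ⟨n - 1, by have := k.pos; omega⟩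
  refine cbr_sub_one_le_of_forall_exists fun i j hij => ?_
  rcases exists_cdist_succAbove_le h.apply_succAbove i j with hle | hle | hle
  · exact ⟨_, _, Fin.succAbove_right_injective.ne hij, hle⟩
  · exact ⟨_, _, Fin.succAbove_ne k i, hle⟩
  · exact ⟨_, _, (Fin.succAbove_ne k j).symm, hle⟩
end

section
/- If σ' ∈ S_{n−1} is obtained from σ ∈ S_n by deleting a single entry (and standardizing), then br(σ') ≥ br(σ) − 1. -/
open Finset

/-!
Deleting the entry at position `k` embeds the remaining points of the plot of `σ` back via
`k.succAbove` in the positions and `(σ k).succAbove` in the values, so each coordinate distance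
grows by at most one. If both grow, a pair at distance `d` in `σ'` is at distance `d + 2` in `σ`,
and the deleted point `(k, σ k)` lies in the bounding box of the pair; so `d + 2` is the sum of
the two distances to `(k, σ k)`, both positive, and one of them is at most `d + 1`.
-/

namespace Fin

lemma val_succAbove {m : ℕ} (c : Fin (m + 1)) (a : Fin m) :
    (c.succAbove a : ℕ) = if (a : ℕ) < c then (a : ℕ) else (a : ℕ) + 1 := by
  unfold succAbove
  split_ifs <;> simp_all [lt_def]

lemma dist_succAbove_le {m : ℕ} (c : Fin (m + 1)) (a b : Fin m) :
    Nat.dist (c.succAbove a) (c.succAbove b) ≤ Nat.dist a b + 1 := by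
  simp only [Nat.dist, val_succAbove]
  split_ifs <;> omega

lemma dist_succAbove_eq_add_of_lt {m : ℕ} (c : Fin (m + 1)) (a b : Fin m)
    (h : Nat.dist a b < Nat.dist (c.succAbove a) (c.succAbove b)) :
    Nat.dist (c.succAbove a) c + Nat.dist c (c.succAbove b) =
      Nat.dist (c.succAbove a) (c.succAbove b) := by
  simp only [Nat.dist, val_succAbove] at h ⊢
  split_ifs at h ⊢ <;> omega

lemma eq_succAbove_of_strictMono {m : ℕ} {f : Fin m → Fin (m + 1)} (hf : StrictMono f)
    {c : Fin (m + 1)} (hc : ∀ a, f a ≠ c) : f = c.succAbove := by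
  refine (hf.range_inj (strictMono_succAbove c)).1 ?_
  have hsub : Set.range f ⊆ {c}ᶜ := by
    rintro _ ⟨a, rfl⟩
    exact hc a
  refine Set.eq_of_subset_of_ncard_le (range_succAbove c ▸ hsub) ?_
  rw [Set.ncard_range_of_injective succAbove_right_injective,
    Set.ncard_range_of_injective hf.injective]

end Fin

lemma exists_mdist_le_mdist_add_one {m : ℕ} {σ : Fin (m + 1) → Fin (m + 1)} {τ : Fin m → Fin m}
    {k : Fin (m + 1)} (hστ : ∀ a, σ (k.succAbove a) = (σ k).succAbove (τ a))
    {i j : Fin m} (hij : i ≠ j) : ∃ x y, x ≠ y ∧ mdist σ x y ≤ mdist τ i j + 1 := by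
  have hpos_le := k.dist_succAbove_le i j
  have hval_le := (σ k).dist_succAbove_le (τ i) (τ j)
  by_cases hgrow : Nat.dist i j < Nat.dist (k.succAbove i) (k.succAbove j) ∧
      Nat.dist (τ i) (τ j) < Nat.dist ((σ k).succAbove (τ i)) ((σ k).succAbove (τ j))
  · have hsplit_pos := k.dist_succAbove_eq_add_of_lt i j hgrow.1
    have hsplit_val := (σ k).dist_succAbove_eq_add_of_lt (τ i) (τ j) hgrow.2
    have hkj : 0 < Nat.dist k (k.succAbove j) :=
      Nat.dist_pos_of_ne fun h => Fin.succAbove_ne k j (Fin.ext h).symm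
    refine ⟨k.succAbove i, k, Fin.succAbove_ne k i, ?_⟩
    simp only [mdist, hστ] at hsplit_val ⊢
    omega
  · refine ⟨k.succAbove i, k.succAbove j, Fin.succAbove_right_injective.ne hij, ?_⟩
    simp only [mdist, hστ]
    omega

lemma br_tsub_one_le_br {n m : ℕ} {σ : Fin n → Fin n} {τ : Fin m → Fin m}
    (h : ∀ i j, i ≠ j → ∃ x y, x ≠ y ∧ mdist σ x y ≤ mdist τ i j + 1) : br σ - 1 ≤ br τ := by
  refine le_sInf ?_
  rintro _ ⟨i, j, hij, rfl⟩
  obtain ⟨x, y, hxy, hle⟩ := h i j hij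
  rw [tsub_le_iff_right]
  calc br σ ≤ mdist σ x y := sInf_le ⟨x, y, hxy, rfl⟩
    _ ≤ (mdist τ i j + 1 : ℕ) := by exact_mod_cast hle
    _ = (mdist τ i j : ℕ∞) + 1 := by push_cast; rfl

theorem stmt_6 (n : ℕ) (σ : Equiv.Perm (Fin n)) (σ' : Equiv.Perm (Fin (n - 1)))
    (k : Fin n) (h : IsPatternOn ⇑σ (Finset.univ.erase k) ⇑σ') :
    br ⇑σ - 1 ≤ br ⇑σ' := by
  obtain ⟨m, rfl⟩ := Nat.exists_eq_succ_of_ne_zero k.pos.ne'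
  exact br_tsub_one_le_br fun i j hij => exists_mdist_le_mdist_add_one h.apply_succAbove hij
end

section
/- If σ is k-prolific in S_n then it is 1-prolific, hence a king permutation; in particular σ ∈ S_n is 1-prolific if and only if br(σ) ≥ 3. -/
open Finset

/-- `σ` is `k`-prolific in `S_n`: it contains `n.choose k` distinct patterns of
length `n - k`. -/
def KProlificS {n : ℕ} (σ : Fin n → Fin n) (k : ℕ) : Prop :=
  {π : Equiv.Perm (Fin (n - k)) | ContainsPat σ ⇑π}.ncard = n.choose k

/-!
The patterns of length `m` contained in `σ` are exactly the standardizations of the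
restrictions of `σ` to the `m`-subsets of positions, so `σ` is `k`-prolific iff this
restriction map is injective on `(n - k)`-subsets.

If `σ` is not king, two adjacent positions `i, i + 1` carry adjacent values; for any `u`
avoiding both, `σ` restricted to `insert i u` and to `insert (i + 1) u` has the same pattern,
so no `1 ≤ k ≤ n - 1` is prolific. Conversely, let `σ` be king and `x < y`. The entry at index
`x` of the pattern obtained by deleting position `x` (resp. `y`) is `σ (x + 1)` (resp. `σ x`)
shifted down by `0` or `1`, so equal patterns would force `|σ (x + 1) - σ x| ≤ 1`.

Finally `br σ ≥ 3` is the king condition, since positions at distance `≥ 2` already have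
Manhattan distance `≥ 3`.
-/

theorem Equiv.Perm.eq_of_lt_iff_lt {m : ℕ} {π ρ : Equiv.Perm (Fin m)}
    (h : ∀ a b, π a < π b ↔ ρ a < ρ b) : π = ρ := by
  let e : Fin m ≃o Fin m :=
    { toEquiv := π.symm.trans ρ
      map_rel_iff' := fun {c d} => by
        simpa [not_lt] using (h (π.symm d) (π.symm c)).not.symm }
  refine Equiv.ext fun a => ?_
  simpa [e] using (congrArg (· (π a)) (Subsingleton.elim e (OrderIso.refl _))).symm

namespace Fin
variable {α : Type*} [LinearOrder α] {m : ℕ}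

/-- The permutation of `Fin m` order-isomorphic to `g` (junk value `1` if `g` is not
injective): `a` is sent to the rank of `g a` among the values of `g`. -/
noncomputable def standardize (g : Fin m → α) : Equiv.Perm (Fin m) :=
  if hg : Function.Injective g then
    Equiv.ofBijective
      (fun a => ((univ.image g).orderIsoOfFin
        ((card_image_of_injective _ hg).trans (card_fin m))).symm
          ⟨g a, mem_image_of_mem g (mem_univ a)⟩)
      (Finite.injective_iff_bijective.1 fun _ _ h =>
        hg (congrArg Subtype.val ((OrderIso.injective _) h)))
  else 1

variable {g : Fin m → α}

theorem orderEmbOfFin_standardize (hg : Function.Injective g) {t : Finset α} (ht : t.card = m)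
    (hgt : ∀ a, g a ∈ t) (a : Fin m) : t.orderEmbOfFin ht (standardize g a) = g a := by
  obtain rfl : univ.image g = t :=
    eq_of_subset_of_card_le (by simpa [subset_iff] using hgt)
      (by rw [ht, card_image_of_injective _ hg, card_fin])
  simp [standardize, hg, ← coe_orderIsoOfFin_apply]

theorem standardize_lt_standardize_iff (hg : Function.Injective g) {a b : Fin m} :
    standardize g a < standardize g b ↔ g a < g b := by
  have ht : (univ.image g).card = m := by rw [card_image_of_injective _ hg, card_fin]
  have hgt (a : Fin m) : g a ∈ univ.image g := mem_image_of_mem g (mem_univ a)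
  rw [← ((univ.image g).orderEmbOfFin ht).lt_iff_lt, orderEmbOfFin_standardize hg ht hgt,
    orderEmbOfFin_standardize hg ht hgt]

theorem eq_standardize_iff (hg : Function.Injective g) {π : Equiv.Perm (Fin m)} :
    π = standardize g ↔ ∀ a b, π a < π b ↔ g a < g b := by
  refine ⟨by rintro rfl a b; exact standardize_lt_standardize_iff hg, fun h => ?_⟩
  exact Equiv.Perm.eq_of_lt_iff_lt fun a b =>
    (h a b).trans (standardize_lt_standardize_iff hg).symm

theorem swap_lt_swap_iff {n : ℕ} {x y u v : Fin n} (hxy : Nat.dist x y = 1) (hu : u ≠ y)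
    (hv : v ≠ y) : Equiv.swap x y u < Equiv.swap x y v ↔ u < v := by
  rw [Nat.dist] at hxy
  simp only [Equiv.swap_apply_def]
  split_ifs <;> grind

theorem val_succAbove_eq_or (p : Fin (m + 1)) (i : Fin m) :
    (p.succAbove i : ℕ) = i ∨ (p.succAbove i : ℕ) = i + 1 := by
  unfold Fin.succAbove
  split <;> simp

end Fin

section Pattern
variable {n m : ℕ} (σ : Equiv.Perm (Fin n))

/-- The pattern of `σ` on the positions `s` (junk value `1` unless `s.card = m`). -/
noncomputable def pattern (m : ℕ) (s : Finset (Fin n)) : Equiv.Perm (Fin m) :=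
  if h : s.card = m then Fin.standardize (σ ∘ s.orderEmbOfFin h) else 1

variable {σ}

theorem pattern_of_card_eq {s : Finset (Fin n)} (h : s.card = m) :
    pattern σ m s = Fin.standardize (σ ∘ s.orderEmbOfFin h) :=
  dif_pos h

theorem containsPat_iff_exists_pattern_eq {π : Equiv.Perm (Fin m)} :
    ContainsPat σ π ↔
      ∃ s ∈ powersetCard m (univ : Finset (Fin n)), pattern σ m s = π := by
  constructor
  · rintro ⟨f, hf, hπ⟩
    have hs : (univ.image f).card = m :=
      (card_image_of_injective _ hf.injective).trans (card_fin m)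
    refine ⟨univ.image f, mem_powersetCard.2 ⟨subset_univ _, hs⟩, ?_⟩
    have hfs : f = (univ.image f).orderEmbOfFin hs :=
      orderEmbOfFin_unique hs (fun a => mem_image_of_mem f (mem_univ a)) hf
    rw [pattern_of_card_eq hs, ← hfs, eq_comm,
      Fin.eq_standardize_iff (σ.injective.comp hf.injective)]
    exact hπ
  · rintro ⟨s, hs, rfl⟩
    have hs := (mem_powersetCard.1 hs).2
    refine ⟨s.orderEmbOfFin hs, (s.orderEmbOfFin hs).strictMono, fun a b => ?_⟩
    rw [pattern_of_card_eq hs]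
    exact Fin.standardize_lt_standardize_iff (σ.injective.comp (s.orderEmbOfFin hs).injective)

theorem kProlificS_iff_injOn_pattern {k : ℕ} (hk : k ≤ n) :
    KProlificS σ k ↔
      Set.InjOn (pattern σ (n - k)) (powersetCard (n - k) (univ : Finset (Fin n))) := by
  have hpat : {π : Equiv.Perm (Fin (n - k)) | ContainsPat σ π} =
      (powersetCard (n - k) (univ : Finset (Fin n))).image (pattern σ (n - k)) := by
    ext π
    simp [containsPat_iff_exists_pattern_eq]
  have hcard : (powersetCard (n - k) (univ : Finset (Fin n))).card = n.choose k := by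
    rw [card_powersetCard, card_fin, Nat.choose_symm hk]
  rw [KProlificS, hpat, Set.ncard_coe_finset, ← hcard]
  exact card_image_iff

end Pattern

section Adjacent
variable {n m : ℕ} {σ : Equiv.Perm (Fin n)}

theorem pattern_insert_eq_of_adjacent {i j : Fin n} (hij : (j : ℕ) = i + 1)
    (hσij : Nat.dist (σ i) (σ j) = 1) {u : Finset (Fin n)} (hiu : i ∉ u) (hju : j ∉ u)
    (hu : u.card + 1 = m) : pattern σ m (insert i u) = pattern σ m (insert j u) := by
  have hs : (insert i u).card = m := by rw [card_insert_of_notMem hiu, hu]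
  have ht : (insert j u).card = m := by rw [card_insert_of_notMem hju, hu]
  generalize hf : (insert i u).orderEmbOfFin hs = f
  have hfmem (a : Fin m) : f a ∈ insert i u := hf ▸ (insert i u).orderEmbOfFin_mem hs a
  have hfj (a : Fin m) (h : f a = j) : False := by
    rcases mem_insert.1 (h ▸ hfmem a) with h' | h'
    · simp [h'] at hij
    · exact hju h'
  have hswap : Equiv.swap i j ∘ f = (insert j u).orderEmbOfFin ht := by
    refine orderEmbOfFin_unique ht (fun a => ?_) fun a b hab => ?_
    · by_cases hai : f a = i
      · simp [hai]
      · rw [Function.comp_apply, Equiv.swap_apply_of_ne_of_ne hai (hfj a)]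
        exact mem_insert_of_mem ((mem_insert.1 (hfmem a)).resolve_left hai)
    · exact (Fin.swap_lt_swap_iff (by simp [Nat.dist, hij]) (hfj a) (hfj b)).2 (f.strictMono hab)
  rw [pattern_of_card_eq ht, ← hswap, pattern_of_card_eq hs, hf,
    Fin.eq_standardize_iff (σ.injective.comp ((Equiv.injective _).comp f.injective))]
  intro a b
  simp only [Function.comp_apply, σ.injective.map_swap]
  rw [Fin.swap_lt_swap_iff hσij (σ.injective.ne (hfj a)) (σ.injective.ne (hfj b)),
    Fin.standardize_lt_standardize_iff (σ.injective.comp f.injective)]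
  rfl

theorem isKing_of_injOn_pattern (hm : 1 ≤ m) (hmn : m < n)
    (hinj : Set.InjOn (pattern σ m) (powersetCard m (univ : Finset (Fin n)))) : IsKing σ := by
  intro i j hij
  have hij' : i ≠ j := fun h => by simp [h] at hij
  by_contra! hle
  have hσij : Nat.dist (σ i) (σ j) = 1 := by
    have hne : (σ i : ℕ) ≠ σ j := fun h => hij' (σ.injective (Fin.ext h))
    simp only [Nat.dist] at hle ⊢
    omega
  obtain ⟨u, hu, hcard⟩ : ∃ u ⊆ (univ.erase i).erase j, u.card = m - 1 :=
    exists_subset_card_eq (by simp [card_erase_of_mem, hij'.symm]; omega)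
  have hiu : i ∉ u := fun h => by simpa using hu h
  have hju : j ∉ u := fun h => by simpa using hu h
  have hmem (k : Fin n) (hk : k ∉ u) :
      insert k u ∈ (powersetCard m (univ : Finset (Fin n)) : Set (Finset (Fin n))) := by
    simp [card_insert_of_notMem hk, hcard]; omega
  have hsets := hinj (hmem i hiu) (hmem j hju)
    (pattern_insert_eq_of_adjacent hij hσij hiu hju (by omega))
  have hi : i ∈ insert j u := hsets ▸ mem_insert_self i u
  simp [hij', hiu] at hi

end Adjacent

section King
variable {m : ℕ} {σ : Equiv.Perm (Fin (m + 1))}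

theorem apply_succAbove_eq_succAbove_pattern (x : Fin (m + 1)) (a : Fin m) :
    σ (x.succAbove a) = (σ x).succAbove (pattern σ m {x}ᶜ a) := by
  have hg : Function.Injective (σ ∘ x.succAbove) :=
    σ.injective.comp Fin.succAbove_right_injective
  have hx : ({x}ᶜ : Finset (Fin (m + 1))).card = m := by simp [card_compl]
  have hσx : ({σ x}ᶜ : Finset (Fin (m + 1))).card = m := by simp [card_compl]
  have hpat : pattern σ m {x}ᶜ = Fin.standardize (σ ∘ x.succAbove) := by
    rw [pattern_of_card_eq hx, orderEmbOfFin_compl_singleton_eq_succAboveOrderEmb]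
    rfl
  rw [hpat]
  simpa using (Fin.orderEmbOfFin_standardize hg hσx (fun b => by simp [Fin.succAbove_ne]) a).symm

theorem pattern_compl_singleton_ne (hσ : IsKing σ) {x y : Fin (m + 1)} (hxy : x < y) :
    pattern σ m {x}ᶜ ≠ pattern σ m {y}ᶜ := by
  obtain ⟨a, rfl⟩ := Fin.exists_castSucc_eq.2 (Fin.ne_last_of_lt hxy)
  intro heq
  have h₁ := apply_succAbove_eq_succAbove_pattern (σ := σ) a.castSucc a
  have h₂ := apply_succAbove_eq_succAbove_pattern (σ := σ) y a
  rw [Fin.succAbove_castSucc_self, heq] at h₁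
  rw [Fin.succAbove_of_castSucc_lt _ _ hxy] at h₂
  have hking := hσ a.castSucc a.succ (by simp)
  have hsucc := h₁ ▸ Fin.val_succAbove_eq_or (σ a.castSucc) (pattern σ m {y}ᶜ a)
  have hcast := h₂ ▸ Fin.val_succAbove_eq_or (σ y) (pattern σ m {y}ᶜ a)
  rw [Nat.dist] at hking
  omega

theorem injOn_pattern_of_isKing (hσ : IsKing σ) :
    Set.InjOn (pattern σ m) (powersetCard m (univ : Finset (Fin (m + 1)))) := by
  have hcompl {s : Finset (Fin (m + 1))} (hs : s ∈ powersetCard m univ) : ∃ x, s = {x}ᶜ := by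
    have hcard : sᶜ.card = 1 := by simp [card_compl, (mem_powersetCard.1 hs).2]
    obtain ⟨x, hx⟩ := card_eq_one.1 hcard
    exact ⟨x, by rw [← hx, compl_compl]⟩
  intro s hs t ht heq
  obtain ⟨x, rfl⟩ := hcompl hs
  obtain ⟨y, rfl⟩ := hcompl ht
  rcases lt_trichotomy x y with hxy | rfl | hxy
  · exact absurd heq (pattern_compl_singleton_ne hσ hxy)
  · rfl
  · exact absurd heq.symm (pattern_compl_singleton_ne hσ hxy)

end King

theorem three_le_br_iff {n : ℕ} (σ : Fin n → Fin n) :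
    3 ≤ br σ ↔ ∀ i j, i ≠ j → 3 ≤ mdist σ i j := by
  simp only [br, le_sInf_iff, Set.mem_ofPred_eq, forall_exists_index, and_imp]
  exact ⟨fun h i j hij => by exact_mod_cast h _ i j hij rfl,
    fun h _ i j hij hx => hx ▸ by exact_mod_cast h i j hij⟩

theorem three_le_br_iff_isKing {n : ℕ} (σ : Equiv.Perm (Fin n)) : 3 ≤ br σ ↔ IsKing σ := by
  rw [three_le_br_iff]
  refine ⟨fun h i j hij => ?_, fun h i j hij => ?_⟩
  · have hdist := h i j (fun h' => by simp [h'] at hij)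
    simp only [mdist, Nat.dist] at hdist ⊢
    omega
  · have hσ : (σ i : ℕ) ≠ σ j := fun h' => hij (σ.injective (Fin.ext h'))
    have hij' : (i : ℕ) ≠ j := fun h' => hij (Fin.ext h')
    have hking : (j : ℕ) = i + 1 ∨ (i : ℕ) = j + 1 → 1 < Nat.dist (σ i) (σ j) := by
      rintro (h' | h')
      · exact h i j h'
      · exact Nat.dist_comm (σ j : ℕ) (σ i) ▸ h j i h'
    simp only [mdist, Nat.dist] at hking ⊢
    omega

theorem stmt_10 (n k : ℕ) (hk : 1 ≤ k) (hkn : k ≤ n - 1) (σ : Equiv.Perm (Fin n)) :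
    (KProlificS ⇑σ k → KProlificS ⇑σ 1 ∧ IsKing ⇑σ) ∧
      (KProlificS ⇑σ 1 ↔ 3 ≤ br ⇑σ) := by
  obtain ⟨m, rfl⟩ : ∃ m, n = m + 1 := ⟨n - 1, by omega⟩
  have prolific_one_iff : KProlificS σ 1 ↔ IsKing σ := by
    rw [kProlificS_iff_injOn_pattern (by omega), Nat.add_sub_cancel]
    exact ⟨isKing_of_injOn_pattern (by omega) (by omega), injOn_pattern_of_isKing⟩
  refine ⟨fun hσ => ?_, prolific_one_iff.trans (three_le_br_iff_isKing σ).symm⟩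
  have hking := isKing_of_injOn_pattern (by omega) (by omega)
    ((kProlificS_iff_injOn_pattern (by omega)).1 hσ)
  exact ⟨prolific_one_iff.2 hking, hking⟩
end

section
/- For every cylindrical king permutation σ ∈ CK_n with n ≥ 5, there exists π ∈ orb([31425]) ∪ orb([24135]) such that π ⪯ σ; equivalently, every cylindrical king permutation of order at least 5 contains some cylindrical king pattern of length 5. -/
open Finset

/-!
Rotating `σ` so that its value `0` sits in position `0` keeps it cylindrical king. The letters
`τ 1, …, τ (n - 1)` of the rotation `τ` then form a word without bonds: between the cyclically
adjacent letters `x` and `y` (which differ by at least `2`) the value `min x y + 1` occurs, and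
not in position `0`. A word avoiding `2413` and `3142` is separable, i.e. a direct or skew sum of
two shorter words, and each block of such a sum inherits bond-freeness; so by induction on the
length every bond-free word of length `≥ 2` contains `2413` or `3142`. Together with the leading
`0` this is an occurrence of `13524` or `14253` in `τ`. Undoing the rotation turns it into an
occurrence in `σ` of a rotation of that pattern, and rotations preserve being cylindrical king.
-/

section Words

open OrderDual

variable {α : Type*} [LinearOrder α] {w : ℕ → α} {a b k : ℕ}

def Has2413Or3142 (w : ℕ → α) (a b : ℕ) : Prop :=
  ∃ i j k l, a ≤ i ∧ i < j ∧ j < k ∧ k < l ∧ l < b ∧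
    (w k < w i ∧ w i < w l ∧ w l < w j ∨ w j < w l ∧ w l < w i ∧ w i < w k)

def IsDirectSumAt (w : ℕ → α) (a k b : ℕ) : Prop :=
  ∀ i j, a ≤ i → i < k → k ≤ j → j < b → w i < w j

def IsDecomposable (w : ℕ → α) (a b : ℕ) : Prop :=
  ∃ k, a < k ∧ k < b ∧ (IsDirectSumAt w a k b ∨ IsDirectSumAt (fun i => toDual (w i)) a k b)

def IsBondFree (w : ℕ → α) (a b : ℕ) : Prop :=
  ∀ i, a ≤ i → i + 1 < b → ∃ k, a ≤ k ∧ k < b ∧ w k ∈ Set.uIoo (w i) (w (i + 1))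

lemma Has2413Or3142.mono {a' b' : ℕ} (h : Has2413Or3142 w a' b') (ha : a ≤ a') (hb : b' ≤ b) :
    Has2413Or3142 w a b := by
  obtain ⟨i, j, k, l, hai, hij, hjk, hkl, hlb, hw⟩ := h
  exact ⟨i, j, k, l, by omega, hij, hjk, hkl, by omega, hw⟩

lemma Has2413Or3142.of_toDual (h : Has2413Or3142 (fun i => toDual (w i)) a b) :
    Has2413Or3142 w a b := by
  obtain ⟨i, j, k, l, hai, hij, hjk, hkl, hlb, hw⟩ := h
  simp only [toDual_lt_toDual] at hw
  exact ⟨i, j, k, l, hai, hij, hjk, hkl, hlb, by tauto⟩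

lemma exists_threshold_of_upClosed {P : ℕ → Prop} {a k i₀ : ℕ}
    (hup : ∀ i j, a ≤ i → i < j → j < k → P i → P j) (hai₀ : a ≤ i₀) (hi₀ : P i₀) :
    ∃ c, a ≤ c ∧ c ≤ i₀ ∧ (∀ i, a ≤ i → i < c → ¬ P i) ∧ ∀ j, c ≤ j → j < k → P j := by
  classical
  have hex : ∃ c, a ≤ c ∧ P c := ⟨i₀, hai₀, hi₀⟩
  obtain ⟨hac, hc⟩ := Nat.find_spec hex
  refine ⟨Nat.find hex, hac, Nat.find_min' hex ⟨hai₀, hi₀⟩,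
    fun i hai hic hi => Nat.find_min hex hic ⟨hai, hi⟩, fun j hcj hjk => ?_⟩
  rcases hcj.lt_or_eq with h | rfl
  · exact hup _ j hac h hjk hc
  · exact hc

lemma IsDirectSumAt.isDecomposable_succ (hsum : IsDirectSumAt w a k b) (hak : a < k)
    (hkb : k < b) (hinj : Set.InjOn w (Set.Ico a (b + 1)))
    (hno : ¬ Has2413Or3142 w a (b + 1)) : IsDecomposable w a (b + 1) := by
  have hcmp : ∀ i, a ≤ i → i < b → w i < w b ∨ w b < w i := fun i hai hib =>
    lt_or_gt_of_ne fun h => by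
      have := hinj (Set.mem_Ico.2 ⟨hai, by omega⟩) (Set.mem_Ico.2 ⟨by omega, by omega⟩) h
      omega
  -- otherwise `i, j, k, b` would form a 3142
  have hup : ∀ i j, a ≤ i → i < j → j < k → w b < w i → w b < w j := fun i j hai hij hjk hi =>
    (hcmp j (by omega) (by omega)).resolve_left fun hj =>
      hno ⟨i, j, k, b, hai, hij, hjk, hkb, by omega,
        Or.inr ⟨hj, hi, hsum i k hai (by omega) le_rfl hkb⟩⟩
  by_cases hleft : ∀ i, a ≤ i → i < k → w i < w b
  · refine ⟨k, hak, by omega, Or.inl fun i j hai hik hkj hjb => ?_⟩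
    rcases (show j < b ∨ j = b by omega) with hjb | rfl
    · exact hsum i j hai hik hkj hjb
    · exact hleft i hai hik
  by_cases hall : ∀ j, a ≤ j → j < b → w b < w j
  · refine ⟨b, by omega, by omega, Or.inr fun i j hai hib hbj hjb => ?_⟩
    obtain rfl : j = b := by omega
    exact hall i hai hib
  push Not at hleft hall
  obtain ⟨i₀, hai₀, hi₀k, hi₀⟩ := hleft
  obtain ⟨j₀, haj₀, hj₀b, hj₀⟩ := hall
  replace hi₀ : w b < w i₀ := (hcmp i₀ hai₀ (by omega)).resolve_left hi₀.not_gt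
  replace hj₀ : w j₀ < w b := (hcmp j₀ haj₀ hj₀b).resolve_right hj₀.not_gt
  have hj₀k : j₀ < k := by
    by_contra! h
    exact (hsum i₀ j₀ hai₀ hi₀k h hj₀b).not_gt (hj₀.trans hi₀)
  obtain ⟨c, hac, hci₀, hbelow, habove⟩ := exists_threshold_of_upClosed hup hai₀ hi₀
  have hj₀c : j₀ < c := by
    by_contra! h
    exact (habove j₀ h hj₀k).not_gt hj₀
  refine ⟨c, by omega, by omega, Or.inl fun i j hai hic hcj hjb => ?_⟩
  have hi : w i < w b := (hcmp i hai (by omega)).resolve_right (hbelow i hai hic)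
  rcases (show j < k ∨ (k ≤ j ∧ j < b) ∨ j = b by omega) with hjk | ⟨hkj, hjb⟩ | rfl
  · exact hi.trans (habove j hcj hjk)
  · exact hi.trans (hi₀.trans (hsum i₀ j hai₀ hi₀k hkj hjb))
  · exact hi

lemma isDecomposable_of_not_has2413Or3142 (hab : a + 2 ≤ b) (hinj : Set.InjOn w (Set.Ico a b))
    (hno : ¬ Has2413Or3142 w a b) : IsDecomposable w a b := by
  induction b, hab using Nat.le_induction with
  | base =>
    have hne : w a ≠ w (a + 1) := hinj.ne (by simp) (by simp) (by omega)
    have hpair : ∀ i j, a ≤ i → i < a + 1 → a + 1 ≤ j → j < a + 2 → i = a ∧ j = a + 1 := by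
      omega
    refine ⟨a + 1, by omega, by omega, ?_⟩
    rcases hne.lt_or_gt with h | h
    · exact Or.inl fun i j hai hia hj hjb => by
        obtain ⟨rfl, rfl⟩ := hpair i j hai hia hj hjb; exact h
    · exact Or.inr fun i j hai hia hj hjb => by
        obtain ⟨rfl, rfl⟩ := hpair i j hai hia hj hjb; exact h
  | succ b hab ih =>
    obtain ⟨k, hak, hkb, hsum | hsum⟩ :=
      ih (hinj.mono (Set.Ico_subset_Ico_right (by omega))) fun h => hno (h.mono le_rfl (by omega))
    · exact hsum.isDecomposable_succ hak hkb hinj hno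
    · obtain ⟨c, hac, hcb, hc⟩ := hsum.isDecomposable_succ hak hkb hinj fun h => hno h.of_toDual
      exact ⟨c, hac, hcb, hc.symm⟩

lemma isBondFree_toDual_iff :
    IsBondFree (fun i => toDual (w i)) a b ↔ IsBondFree w a b := by
  simp [IsBondFree]

lemma IsBondFree.of_isDirectSumAt (h : IsBondFree w a b) (hsum : IsDirectSumAt w a k b)
    (hak : a ≤ k) (hkb : k ≤ b) :
    IsBondFree w a k ∧ IsBondFree w k b := by
  constructor
  · intro i hai hik
    obtain ⟨c, hac, hcb, hc⟩ := h i hai (by omega)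
    refine ⟨c, hac, ?_, hc⟩
    by_contra! hkc
    exact hc.2.not_gt
      (max_lt (hsum i c hai (by omega) hkc hcb) (hsum (i + 1) c (by omega) hik hkc hcb))
  · intro i hki hib
    obtain ⟨c, hac, hcb, hc⟩ := h i (by omega) hib
    refine ⟨c, ?_, hcb, hc⟩
    by_contra! hck
    exact hc.1.not_gt
      (lt_min (hsum c i hac hck hki (by omega)) (hsum c (i + 1) hac hck (by omega) hib))

theorem has2413Or3142_of_isBondFree (hab : a + 2 ≤ b) (hinj : Set.InjOn w (Set.Ico a b))
    (hbf : IsBondFree w a b) : Has2413Or3142 w a b := by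
  induction h : b - a using Nat.strong_induction_on generalizing a b with
  | _ len ih =>
    by_contra hno
    obtain ⟨k, hak, hkb, hsum⟩ := isDecomposable_of_not_has2413Or3142 hab hinj hno
    have hblocks : IsBondFree w a k ∧ IsBondFree w k b := by
      rcases hsum with hsum | hsum
      · exact hbf.of_isDirectSumAt hsum hak.le hkb.le
      · simpa only [isBondFree_toDual_iff] using
          (isBondFree_toDual_iff.2 hbf).of_isDirectSumAt hsum hak.le hkb.le
    have hb3 : a + 3 ≤ b := by
      obtain ⟨c, hac, hcb, hc⟩ := hbf a le_rfl (by omega)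
      by_contra! hb
      rcases (show c = a ∨ c = a + 1 by omega) with rfl | rfl
      · exact Set.left_notMem_uIoo hc
      · exact Set.right_notMem_uIoo hc
    rcases le_or_gt (a + 2) k with hk | hk
    · exact hno ((ih (k - a) (by omega) hk (hinj.mono (Set.Ico_subset_Ico_right hkb.le))
        hblocks.1 rfl).mono le_rfl hkb.le)
    · exact hno ((ih (b - k) (by omega) (by omega) (hinj.mono (Set.Ico_subset_Ico_left hak.le))
        hblocks.2 rfl).mono hak.le le_rfl)

end Words

theorem StrictMono.exists_add_rotate {m n : ℕ} [NeZero m] {f : Fin m → Fin n}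
    (hf : StrictMono f) (r : Fin n) : ∃ t : Fin m, StrictMono (fun a => f (a + t) + r) := by
  have hmono : ∀ x y : Fin m, (x : ℕ) < y ↔ (f x : ℕ) < f y := fun x y => hf.lt_iff_lt.symm
  by_cases hwrap : ∃ a, n ≤ (f a : ℕ) + r
  · -- the indices whose image wraps around form a final segment `[s, m)`
    obtain ⟨s, hs⟩ : ∃ s : Fin m, ∀ a, n ≤ (f a : ℕ) + r ↔ s ≤ a := by
      classical
      let W := Finset.univ.filter fun a => n ≤ (f a : ℕ) + r
      have hW : W.Nonempty := by simpa [W, Finset.filter_nonempty_iff] using hwrap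
      refine ⟨W.min' hW, fun a => ⟨fun ha => W.min'_le a (by simp [W, ha]), fun ha => ?_⟩⟩
      have := (Finset.mem_filter.1 (W.min'_mem hW)).2
      have := hf.monotone ha
      rw [Fin.le_def] at this
      omega
    refine ⟨s, fun a b hab => ?_⟩
    have hx := hs (a + s)
    have hy := hs (b + s)
    have hxy := hmono (a + s) (b + s)
    have hyx := hmono (b + s) (a + s)
    have := (f (a + s)).isLt
    have := (f (b + s)).isLt
    have := a.isLt
    have := b.isLt
    have := r.isLt
    rw [Fin.lt_def] at hab ⊢
    rw [Fin.le_def] at hx hy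
    simp only [Fin.val_add_eq_ite] at hx hy hxy hyx ⊢
    split_ifs at * <;> omega
  · push Not at hwrap
    refine ⟨0, fun a b hab => ?_⟩
    have hab' := (hmono a b).1 hab
    have := hwrap a
    have := hwrap b
    simp only [add_zero, Fin.lt_def, Fin.val_add_eq_ite]
    split_ifs <;> omega

theorem ContainsPat.of_comp_addRight {m n : ℕ} [NeZero m] {σ : Fin n → Fin n}
    {π : Fin m → Fin m} {r : Fin n} (h : ContainsPat (fun i => σ (i + r)) π) :
    ∃ t : Fin m, ContainsPat σ (fun a => π (a + t)) := by
  obtain ⟨f, hf, hiso⟩ := h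
  obtain ⟨t, ht⟩ := hf.exists_add_rotate r
  exact ⟨t, _, ht, fun a b => hiso (a + t) (b + t)⟩

section CylKing

variable {n : ℕ} [NeZero n]

lemma isCylKing_iff {σ : Fin n → Fin n} :
    IsCylKing σ ↔ ∀ i : Fin n, i ≠ i + 1 → 1 < Nat.dist (σ i) (σ (i + 1)) := by
  have hsucc : ∀ i j : Fin n, (j : ℕ) = ((i : ℕ) + 1) % n ↔ j = i + 1 := by
    intro i j; rw [Fin.ext_iff, Fin.val_add, Fin.val_one', Nat.add_mod_mod]
  simp only [IsCylKing, hsucc]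
  exact ⟨fun h i hi => h i _ hi rfl, fun h i j hij hj => hj ▸ h i (hj ▸ hij)⟩

lemma IsCylKing.comp_addRight {σ : Fin n → Fin n} (h : IsCylKing σ) (r : Fin n) :
    IsCylKing (fun i => σ (i + r)) := by
  rw [isCylKing_iff] at h ⊢
  intro i hi
  rw [add_right_comm]
  exact h (i + r) (by rwa [add_right_comm, Ne, add_left_inj])

end CylKing

lemma Equiv.lt_iff_lt_of_strictMono_comp_symm {α β γ : Type*} [LinearOrder γ] [Preorder β]
    (π : α ≃ γ) {g : α → β} (hg : StrictMono (g ∘ π.symm)) (a b : α) :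
    π a < π b ↔ g a < g b := by
  simpa using (hg.lt_iff_lt (a := π a) (b := π b)).symm

-- 0-based one-line notation; `13524 ∈ orb([24135])` and `14253 ∈ orb([31425])`
def perm13524 : Equiv.Perm (Fin 5) := ⟨![0, 2, 4, 1, 3], ![0, 3, 1, 4, 2], by decide, by decide⟩

def perm14253 : Equiv.Perm (Fin 5) := ⟨![0, 3, 1, 4, 2], ![0, 2, 4, 1, 3], by decide, by decide⟩

lemma isCylKing_perm13524 : IsCylKing ⇑perm13524 := by unfold IsCylKing; decide

lemma isCylKing_perm14253 : IsCylKing ⇑perm14253 := by unfold IsCylKing; decide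

open Fin.NatCast in
lemma IsCylKing.isBondFree_of_apply_zero {n : ℕ} [NeZero n] {τ : Equiv.Perm (Fin n)}
    (hτ : IsCylKing ⇑τ) (hτ0 : τ 0 = 0) : IsBondFree (fun i : ℕ => τ (i : Fin n)) 1 n := by
  intro i hi hin
  have hval : ∀ j, j < n → ((j : Fin n) : ℕ) = j := fun j hj => Fin.val_cast_of_lt hj
  have hpos : ∀ y : Fin n, y ≠ 0 → (τ y : ℕ) ≠ 0 := fun y hy h =>
    hy (τ.injective ((Fin.ext h).trans hτ0.symm))
  have hsucc : ((i + 1 : ℕ) : Fin n) = (i : Fin n) + 1 := Nat.cast_succ i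
  have hx1 : (((i : Fin n) + 1 : Fin n) : ℕ) = i + 1 := hsucc ▸ hval _ hin
  have hx : ((i : Fin n) : ℕ) = i := hval i (by omega)
  simp only [hsucc]
  generalize (i : Fin n) = x at hx hx1 ⊢
  have hdist : 1 < Nat.dist (τ x) (τ (x + 1)) :=
    isCylKing_iff.1 hτ x fun h => by have := congrArg Fin.val h; omega
  have hτx := hpos x fun h => by rw [h, Fin.val_zero] at hx; omega
  have hτx1 := hpos (x + 1) fun h => by rw [h, Fin.val_zero] at hx1; omega
  unfold Nat.dist at hdist
  set c : Fin n := ⟨min (τ x : ℕ) (τ (x + 1)) + 1, by omega⟩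
  have hc : (c : ℕ) = min (τ x : ℕ) (τ (x + 1)) + 1 := rfl
  refine ⟨τ.symm c, Nat.one_le_iff_ne_zero.2 fun h => ?_, (τ.symm c).isLt, ?_⟩
  · have := congrArg (fun y => (τ y : ℕ)) (Fin.ext h : τ.symm c = 0)
    simp only [Equiv.apply_symm_apply, hτ0, Fin.val_zero] at this
    omega
  · simp only [Fin.cast_val_eq_self, Equiv.apply_symm_apply]
    rcases le_total (τ x) (τ (x + 1)) with h | h <;> rw [Fin.le_def] at h
    · exact Set.mem_uIoo_of_lt (Fin.lt_def.2 (by omega)) (Fin.lt_def.2 (by omega))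
    · exact Set.mem_uIoo_of_gt (Fin.lt_def.2 (by omega)) (Fin.lt_def.2 (by omega))

open Fin.NatCast in
theorem exists_isCylKing_containsPat_of_apply_zero {n : ℕ} [NeZero n] (hn : 3 ≤ n)
    {τ : Equiv.Perm (Fin n)} (hτ : IsCylKing ⇑τ) (hτ0 : τ 0 = 0) :
    ∃ π : Equiv.Perm (Fin 5), IsCylKing ⇑π ∧ ContainsPat ⇑τ ⇑π := by
  have hval : ∀ j, j < n → ((j : Fin n) : ℕ) = j := fun j hj => Fin.val_cast_of_lt hj
  have hinj : Set.InjOn (fun i : ℕ => τ (i : Fin n)) (Set.Ico 1 n) := fun i hi j hj h => by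
    simpa [hval i hi.2, hval j hj.2] using congrArg Fin.val (τ.injective h)
  have hpos : ∀ i, 1 ≤ i → i < n → 0 < τ (i : Fin n) := fun i hi hin =>
    Fin.pos_iff_ne_zero.2 fun h => by
      have := congrArg Fin.val (τ.injective (h.trans hτ0.symm))
      rw [hval i hin, Fin.val_zero] at this
      omega
  obtain ⟨i, j, k, l, h1i, hij, hjk, hkl, hln, hw⟩ :=
    has2413Or3142_of_isBondFree (by omega) hinj (hτ.isBondFree_of_apply_zero hτ0)
  let f : Fin 5 → Fin n := ![0, i, j, k, l]
  have hlt : ∀ x y, x < y → y < n → (x : Fin n) < y := fun x y hxy hy => by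
    rw [Fin.lt_def, hval x (by omega), hval y hy]; exact hxy
  have hf : StrictMono f := by
    simpa [Fin.strictMono_iff_lt_succ, Fin.forall_fin_succ, f] using
      ⟨hlt 0 i (by omega) (by omega), hlt i j hij (by omega), hlt j k hjk (by omega),
        hlt k l hkl hln⟩
  rcases hw with ⟨hki, hil, hlj⟩ | ⟨hjl, hli, hik⟩
  · refine ⟨perm13524, isCylKing_perm13524, f, hf,
      perm13524.lt_iff_lt_of_strictMono_comp_symm ?_⟩
    simpa [Fin.strictMono_iff_lt_succ, Fin.forall_fin_succ, f, perm13524, hτ0] using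
      ⟨hpos k (by omega) (by omega), hki, hil, hlj⟩
  · refine ⟨perm14253, isCylKing_perm14253, f, hf,
      perm14253.lt_iff_lt_of_strictMono_comp_symm ?_⟩
    simpa [Fin.strictMono_iff_lt_succ, Fin.forall_fin_succ, f, perm14253, hτ0] using
      ⟨hpos j (by omega) (by omega), hjl, hli, hik⟩

theorem stmt_13 (n : ℕ) (hn : 5 ≤ n) (σ : Equiv.Perm (Fin n)) (hσ : IsCylKing ⇑σ) :
    ∃ π : Equiv.Perm (Fin 5), IsCylKing ⇑π ∧ ContainsPat ⇑σ ⇑π := by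
  have : NeZero n := ⟨by omega⟩
  let p := σ.symm 0
  obtain ⟨π, hπ, hτπ⟩ := exists_isCylKing_containsPat_of_apply_zero (by omega)
    (τ := (Equiv.addRight p).trans σ) (hσ.comp_addRight p) (by simp [p])
  obtain ⟨t, ht⟩ := ContainsPat.of_comp_addRight (r := p) hτπ
  exact ⟨(Equiv.addRight t).trans π, hπ.comp_addRight t, ht⟩
end

section
/- Let σ = [5,7,9,6,8,3,1,4,2] ∈ CK_9 and π = [1,3,5,2,4] ∈ CK_5. Then π ≺ σ, but there is no τ ∈ CK_n for any 5 < n < 9 with π ≺ τ ≺ σ; hence the gap 4 in the poset of cylindrical king permutations is attained. -/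
open Finset

/-!
If `π ≺ τ ≺ σ`, then `τ` is the standardisation of `σ` on some set `s` of `m` positions and `π`
is the standardisation of `σ` on a 5-element subset of `s`. Whether `τ` is a cylindrical king
permutation can be read off `σ` and `s` alone, via the ranks of positions and values inside `s`,
so the claim becomes a finite search over position sets of `σ`, settled by `decide`.
-/

variable {n m k : ℕ}

/-- `posRank s x` and `valueRank σ s x` are the position and the value of `x` in the
standardisation of `σ` on the positions `s`. -/
def posRank (s : Finset (Fin n)) (x : Fin n) : ℕ := #{y ∈ s | y < x}

def valueRank (σ : Fin n → Fin n) (s : Finset (Fin n)) (x : Fin n) : ℕ := #{y ∈ s | σ y < σ x}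

def IsCylKingOn (σ : Fin n → Fin n) (s : Finset (Fin n)) : Prop :=
  ∀ x ∈ s, ∀ z ∈ s, x ≠ z → posRank s z = (posRank s x + 1) % #s →
    1 < Nat.dist (valueRank σ s x) (valueRank σ s z)

def IsStdOn (σ : Fin n → Fin n) (u : Finset (Fin n)) (π : Fin k → Fin k) : Prop :=
  ∀ x ∈ u, ∀ a : Fin k, posRank u x = a → valueRank σ u x = π a

instance (σ : Fin n → Fin n) : Decidable (IsCylKing σ) := by
  unfold IsCylKing; infer_instance

instance (σ : Fin n → Fin n) (s : Finset (Fin n)) : Decidable (IsCylKingOn σ s) := by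
  unfold IsCylKingOn; infer_instance

instance (σ : Fin n → Fin n) (u : Finset (Fin n)) (π : Fin k → Fin k) :
    Decidable (IsStdOn σ u π) := by
  unfold IsStdOn; infer_instance

lemma posRank_image {f : Fin m → Fin n} (hf : StrictMono f) (a : Fin m) :
    posRank (univ.image f) (f a) = a := by
  rw [posRank, filter_image, card_image_of_injective _ hf.injective]
  simp only [hf.lt_iff_lt]
  rw [filter_gt_eq_Iio, Fin.card_Iio]

lemma valueRank_image {σ : Fin n → Fin n} {τ : Equiv.Perm (Fin m)} {f : Fin m → Fin n}
    (hf : Function.Injective f) (hστ : ∀ a b, τ a < τ b ↔ σ (f a) < σ (f b)) (a : Fin m) :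
    valueRank σ (univ.image f) (f a) = τ a := by
  rw [valueRank, filter_image, card_image_of_injective _ hf]
  simp only [← hστ]
  rw [card_equiv τ (t := {c | c < τ a}) (by simp), filter_gt_eq_Iio, Fin.card_Iio]

lemma card_image_univ {f : Fin m → Fin n} (hf : Function.Injective f) :
    #(univ.image f) = m := by
  rw [card_image_of_injective _ hf, card_univ, Fintype.card_fin]

lemma IsCylKing.isCylKingOn_image {σ : Fin n → Fin n} {τ : Equiv.Perm (Fin m)}
    (hτ : IsCylKing ⇑τ) {f : Fin m → Fin n} (hf : StrictMono f)
    (hστ : ∀ a b, τ a < τ b ↔ σ (f a) < σ (f b)) :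
    IsCylKingOn σ (univ.image f) := by
  simp only [IsCylKingOn, mem_image, mem_univ, true_and]
  rintro _ ⟨a, rfl⟩ _ ⟨b, rfl⟩ hab hnext
  rw [posRank_image hf, posRank_image hf, card_image_univ hf.injective] at hnext
  rw [valueRank_image hf.injective hστ, valueRank_image hf.injective hστ]
  exact hτ a b (ne_of_apply_ne f hab) hnext

lemma isStdOn_image {σ : Fin n → Fin n} {π : Equiv.Perm (Fin k)} {e : Fin k → Fin n}
    (he : StrictMono e) (hσπ : ∀ a b, π a < π b ↔ σ (e a) < σ (e b)) :
    IsStdOn σ (univ.image e) π := by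
  simp only [IsStdOn, mem_image, mem_univ, true_and]
  rintro _ ⟨a, rfl⟩ b hab
  rw [posRank_image he, Fin.val_inj] at hab
  rw [valueRank_image he.injective hσπ, hab]

lemma IsCylKing.exists_isCylKingOn_isStdOn {σ : Fin n → Fin n} {τ : Equiv.Perm (Fin m)}
    {π : Equiv.Perm (Fin k)} (hτ : IsCylKing ⇑τ) (hστ : ContainsPat σ ⇑τ)
    (hτπ : ContainsPat ⇑τ ⇑π) :
    ∃ s ∈ powersetCard m univ, IsCylKingOn σ s ∧ ∃ u ∈ s.powersetCard k, IsStdOn σ u π := by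
  obtain ⟨f, hf, hf_iff⟩ := hστ
  obtain ⟨g, hg, hg_iff⟩ := hτπ
  refine ⟨univ.image f, mem_powersetCard.2 ⟨subset_univ _, card_image_univ hf.injective⟩,
    hτ.isCylKingOn_image hf hf_iff, univ.image (f ∘ g), mem_powersetCard.2 ⟨?_, ?_⟩,
    isStdOn_image (hf.comp hg) fun a b => (hg_iff a b).trans (hf_iff _ _)⟩
  · rw [image_comp]
    exact image_subset_image (subset_univ _)
  · exact card_image_univ (hf.comp hg).injective

set_option maxRecDepth 4000 in
lemma not_exists_isCylKingOn_isStdOn :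
    ∀ m ∈ Ioo 5 9, ¬ ∃ s ∈ powersetCard m (univ : Finset (Fin 9)),
      IsCylKingOn ![4, 6, 8, 5, 7, 2, 0, 3, 1] s ∧
        ∃ u ∈ s.powersetCard 5, IsStdOn ![4, 6, 8, 5, 7, 2, 0, 3, 1] u ![0, 2, 4, 1, 3] := by
  decide

theorem stmt_16 :
    ∃ (σ : Equiv.Perm (Fin 9)) (π : Equiv.Perm (Fin 5)),
      (∀ i, σ i = ![4, 6, 8, 5, 7, 2, 0, 3, 1] i) ∧
      (∀ i, π i = ![0, 2, 4, 1, 3] i) ∧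
      IsCylKing ⇑σ ∧ IsCylKing ⇑π ∧ ContainsPat ⇑σ ⇑π ∧
      ∀ m : ℕ, 5 < m → m < 9 →
        ¬ ∃ τ : Equiv.Perm (Fin m),
            IsCylKing ⇑τ ∧ ContainsPat ⇑σ ⇑τ ∧ ContainsPat ⇑τ ⇑π := by
  refine ⟨⟨![4, 6, 8, 5, 7, 2, 0, 3, 1], ![6, 8, 5, 7, 0, 3, 1, 4, 2], by decide, by decide⟩,
    ⟨![0, 2, 4, 1, 3], ![0, 3, 1, 4, 2], by decide, by decide⟩,
    fun _ => rfl, fun _ => rfl, by decide, by decide,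
    ⟨Fin.castLE (by norm_num), Fin.strictMono_castLE _, by decide⟩, ?_⟩
  rintro m hm5 hm9 ⟨τ, hτ, hστ, hτπ⟩
  exact not_exists_isCylKingOn_isStdOn m (mem_Ioo.2 ⟨hm5, hm9⟩)
    (hτ.exists_isCylKingOn_isStdOn hστ hτπ)
end
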